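/- Let n ≥ 1 be a natural number, T > 0 and V > 0 real numbers, and f : ℝ → ℝ a continuous function on [0, T] such that f(0) = V, f(T) = 0, f(x) ≥ 0 on [0,T], and the function x ↦ f(x)^(1/n) is concave on [0, T]. Then ∫₀^T f(x) dx ≥ V·T/(n+1). -/

import Mathlib

theorem stmt_1 (n : ℕ) (hn : 1 ≤ n) (T V : ℝ) (hT : 0 < T) (hV : 0 < V)
    (f : ℝ → ℝ) (hcont : ContinuousOn f (Set.Icc 0 T))
    (h0 : f 0 = V) (hTend : f T = 0)
    (hnonneg : ∀ x ∈ Set.Icc (0:ℝ) T, 0 ≤ f x)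
    (hconc : ConcaveOn ℝ (Set.Icc 0 T) (fun x => (f x) ^ ((1:ℝ) / n))) :
    V * T / (n + 1) ≤ ∫ x in (0:ℝ)..T, f x := by
  have hn0 : (n:ℝ) ≠ 0 := Nat.cast_ne_zero.mpr (by omega)
  set g : ℝ → ℝ := fun x => (f x) ^ ((1:ℝ)/n) with hg
  have key : ∀ x ∈ Set.Icc (0:ℝ) T, V * (1 - x/T)^n ≤ f x := by
    intro x hx
    obtain ⟨hx0, hxT⟩ := hx
    have ht0 : 0 ≤ x / T := div_nonneg hx0 hT.le
    have ht1 : x / T ≤ 1 := (div_le_one hT).mpr hxT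
    have hcomb := hconc.2 (Set.left_mem_Icc.mpr hT.le) (Set.right_mem_Icc.mpr hT.le)
      (sub_nonneg.mpr ht1) ht0 (by ring)
    have hxeq : (1 - x/T) • (0:ℝ) + (x/T) • T = x := by
      field_simp
      simp [hT.ne']
    rw [hxeq] at hcomb
    have hg0 : g 0 = V ^ ((1:ℝ)/n) := by simp [hg, h0]
    have hgT : g T = 0 := by
      simp only [hg, hTend]
      exact Real.zero_rpow (one_div_ne_zero hn0)
    have hglb : (1 - x/T) * V ^ ((1:ℝ)/n) ≤ g x := by
      simpa [hg0, hgT, smul_eq_mul] using hcomb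
    have hVn : (0:ℝ) ≤ V ^ ((1:ℝ)/n) := Real.rpow_nonneg hV.le _
    have hlb0 : 0 ≤ (1 - x/T) * V ^ ((1:ℝ)/n) := mul_nonneg (sub_nonneg.mpr ht1) hVn
    have hpow := pow_le_pow_left₀ hlb0 hglb n
    have hfx : 0 ≤ f x := hnonneg x ⟨hx0, hxT⟩
    have hgxn : (g x)^n = f x := by
      rw [hg]
      rw [← Real.rpow_natCast ((f x) ^ ((1:ℝ)/n)) n, ← Real.rpow_mul hfx]
      rw [one_div, inv_mul_cancel₀ hn0, Real.rpow_one]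
    have hVnn : (V ^ ((1:ℝ)/n))^n = V := by
      rw [← Real.rpow_natCast, ← Real.rpow_mul hV.le]
      rw [one_div, inv_mul_cancel₀ hn0, Real.rpow_one]
    calc V * (1 - x/T)^n = ((1 - x/T) * V ^ ((1:ℝ)/n))^n := by
          rw [mul_pow, hVnn]; ring
      _ ≤ (g x)^n := hpow
      _ = f x := hgxn
  have hderiv : ∀ x ∈ Set.uIcc (0:ℝ) T,
      HasDerivAt (fun x => -(T/(n+1)) * (1 - x/T)^(n+1)) ((1 - x/T)^n) x := by
    intro x _
    have h1 : HasDerivAt (fun x : ℝ => 1 - x/T) (-(1/T)) x := by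
      simpa using ((hasDerivAt_id x).div_const T).const_sub 1
    have h2 := (h1.pow (n+1)).const_mul (-(T/(n+1)))
    refine HasDerivAt.congr_deriv h2 ?_
    have hne : ((n:ℝ)+1) ≠ 0 := by positivity
    push_cast
    field_simp
  have hcontlb : Continuous fun x : ℝ => V * (1 - x/T)^n := by continuity
  have hint : ∫ x in (0:ℝ)..T, V * (1 - x/T)^n = V * T / (n+1) := by
    rw [intervalIntegral.integral_const_mul,
      intervalIntegral.integral_eq_sub_of_hasDerivAt hderiv
        ((by continuity : Continuous fun x : ℝ => (1 - x/T)^n).intervalIntegrable 0 T)]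
    have hne : ((n:ℝ)+1) ≠ 0 := by positivity
    field_simp
    simp [hT.ne']
  have hfi : IntervalIntegrable f MeasureTheory.volume 0 T := by
    apply ContinuousOn.intervalIntegrable
    rwa [Set.uIcc_of_le hT.le]
  have hmono := intervalIntegral.integral_mono_on hT.le
    (hcontlb.intervalIntegrable 0 T) hfi key
  rw [hint] at hmono
  exact hmono
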